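/- Let C and E be path connected pointed small categories and q : E → C a covering that preserves the base point. Then there exists a unique base-point-preserving functor α : Ĉ → E with q ∘ α = T, where T : Ĉ → C is the universal cover of C. -/

import Mathlib

/-
A covering `q` is both a discrete opfibration (unique lifts of morphisms with given source)
and a discrete fibration (unique lifts with given target). Hence its fibres form a functor
`C ⥤ Type` that sends every morphism to a bijection, and so factors through `π(C)`: points of
the fibre over `x` can be transported along zigzags. The functor `α` sends `(c, w)` to the
transport of `e` along `w`, and a morphism of `Ĉ` to the unique lift of its image in `C`.
Uniqueness holds because `Ĉ` is connected (zigzags of `C` lift to `Ĉ`), and two functors into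
a covering with the same composite with `q` that agree at one object agree everywhere.
-/

open CategoryTheory

universe v u v' u' w

namespace Paper

variable (C : Type u) [Category.{v} C]

/-- The groupoidification `π(C)` of `C`: the localization of `C` at all of its morphisms,
whose morphisms are equivalence classes of zigzags of morphisms of `C`. -/
abbrev piCat := (⊤ : MorphismProperty C).Localization

/-- The canonical functor `C ⥤ π(C)` (the identity on objects). -/
abbrev piQ : C ⥤ piCat C := (⊤ : MorphismProperty C).Q

lemma piQ_isIso {x y : C} (f : x ⟶ y) : IsIso ((piQ C).map f) :=
  MorphismProperty.Q_inverts ⊤ f trivial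

/-- `π₀(C)`: the set of objects of `C` modulo the equivalence relation generated by
`a ∼ b` whenever there is a morphism `a ⟶ b`. -/
abbrev pi0 := ConnectedComponents C

/-- The fundamental group `π₁(C, x) = Hom_{π(C)}(x, x)` (the group of automorphisms of `x`
in the groupoidification of `C`; every morphism of `π(C)` is invertible). -/
abbrev pi1 (x : C) := Aut ((piQ C).obj x)

variable {C} {D : Type u'} [Category.{v'} D]

/-- The functor `π(C) ⥤ π(D)` induced by `F : C ⥤ D`. -/
noncomputable def piMap (F : C ⥤ D) : piCat C ⥤ piCat D :=
  Localization.Construction.lift (F ⋙ piQ D)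
    (fun _ _ f _ => MorphismProperty.Q_inverts ⊤ (F.map f) trivial)

/-- The homomorphism `π₁(C, x) →* π₁(D, F(x))` induced by `F : C ⥤ D`. -/
noncomputable def pi1Map (F : C ⥤ D) (x : C) : pi1 C x →* pi1 D (F.obj x) :=
  (piMap F).mapAut ((piQ C).obj x)

/-- Transport of fundamental groups along an equality of base points. -/
noncomputable def pi1Cast {x y : C} (h : x = y) : pi1 C x ≃* pi1 C y := by subst h; exact MulEquiv.refl _

/-- A functor `F : C ⥤ D` is a weak 1-equivalence if the induced maps
`π₀(C) → π₀(D)` and `π₁(C, x) → π₁(D, F(x))` (for every object `x`) are bijections. -/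
structure IsWeak1Equiv (F : C ⥤ D) : Prop where
  bij0 : Function.Bijective F.mapConnectedComponents
  bij1 : ∀ x : C, Function.Bijective (pi1Map F x)

end Paper
namespace Paper

/-- The terminal category `∗`. -/
abbrev Pt := Discrete PUnit.{1}

/-- The inclusion `∗ → [1]` picking the object `0`. -/
def pick0 : Pt ⥤ Fin 2 := (Functor.const Pt).obj 0
/-- The inclusion `∗ → [1]` picking the object `1`. -/
def pick1 : Pt ⥤ Fin 2 := (Functor.const Pt).obj 1
/-- The inclusion `∗ → [1]ᵒᵖ` picking the object `0`. -/
def pick0op : Pt ⥤ (Fin 2)ᵒᵖ := (Functor.const Pt).obj (Opposite.op 0)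

/-- Right lifting property of `p` against `u`, for strictly commuting squares of functors. -/
def FunctorRLP {A : Type*} {X : Type*} {E : Type*} {B : Type*}
    [Category A] [Category X] [Category E] [Category B]
    (u : A ⥤ X) (p : E ⥤ B) : Prop :=
  ∀ (F : A ⥤ E) (G : X ⥤ B), F ⋙ p = u ⋙ G → ∃ H : X ⥤ E, u ⋙ H = F ∧ H ⋙ p = G

/-- Unique right lifting property of `p` against `u`. -/
def FunctorURLP {A : Type*} {X : Type*} {E : Type*} {B : Type*}
    [Category A] [Category X] [Category E] [Category B]
    (u : A ⥤ X) (p : E ⥤ B) : Prop :=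
  ∀ (F : A ⥤ E) (G : X ⥤ B), F ⋙ p = u ⋙ G → ∃! H : X ⥤ E, u ⋙ H = F ∧ H ⋙ p = G

/-- A functor is a covering iff it has the unique right lifting property with
respect to the two inclusions `∗ → [1]` picking `0` and `1`. -/
def IsCovering {E : Type*} {B : Type*} [Category E] [Category B] (p : E ⥤ B) : Prop :=
  FunctorURLP pick0 p ∧ FunctorURLP pick1 p

/-- The category `I₂ : 1 ← 0 → 2`. -/
inductive I2 : Type
  | z | a | b

instance : PartialOrder I2 where
  le x y := x = y ∨ x = I2.z
  le_refl x := Or.inl rfl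
  le_trans x y z hxy hyz := hxy.elim (fun h => h ▸ hyz) fun h => Or.inr h
  le_antisymm x y hxy hyx := by
    rcases hxy with h | h
    · exact h
    · rcases hyx with h' | h'
      · exact h'.symm
      · rw [h, h']

/-- The identity-on-objects functor `I₂ ⥤ [2]`. -/
def i2Incl : I2 ⥤ Fin 3 :=
  Monotone.functor (f := fun x => match x with | I2.z => 0 | I2.a => 1 | I2.b => 2)
    (by rintro x y (rfl | rfl)
        · exact le_refl _
        · cases y <;> simp)

/-- The objects of the category `CS¹ : 0 → 1 ⇉ 2` (with `0` initial). -/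
inductive CS1 : Type
  | x0 | x1 | x2

/-- The morphisms of `CS¹`. -/
inductive CS1.Hom : CS1 → CS1 → Type
  | id (x : CS1) : CS1.Hom x x
  | a : CS1.Hom CS1.x0 CS1.x1
  | c : CS1.Hom CS1.x0 CS1.x2
  | f : CS1.Hom CS1.x1 CS1.x2
  | g : CS1.Hom CS1.x1 CS1.x2

/-- Composition in `CS¹`. -/
def CS1.comp : ∀ {x y z : CS1}, CS1.Hom x y → CS1.Hom y z → CS1.Hom x z
  | _, _, _, .id _, h => h
  | _, _, _, .a, .id _ => .a
  | _, _, _, .a, .f => .c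
  | _, _, _, .a, .g => .c
  | _, _, _, .c, .id _ => .c
  | _, _, _, .f, .id _ => .f
  | _, _, _, .g, .id _ => .g

instance : Category CS1 where
  Hom := CS1.Hom
  id := CS1.Hom.id
  comp := CS1.comp
  id_comp _ := rfl
  comp_id u := by cases u <;> rfl
  assoc u v w := by cases u <;> cases v <;> cases w <;> rfl

/-- The identity-on-objects functor `CS¹ ⥤ [2]`. -/
def cs1Incl : CS1 ⥤ Fin 3 where
  obj x := match x with | CS1.x0 => 0 | CS1.x1 => 1 | CS1.x2 => 2
  map {x y} u := match u with
    | .id _ => 𝟙 _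
    | .a => homOfLE (by decide)
    | .c => homOfLE (by decide)
    | .f => homOfLE (by decide)
    | .g => homOfLE (by decide)
  map_id _ := rfl
  map_comp _ _ := Subsingleton.elim _ _

/-- A functor is a fibration of the 1-type model structure iff it has the right
lifting property with respect to the six members of the set `J`:
`∗ → [1]`, `∗ → [1]ᵒᵖ`, `I₂ → [2]`, `I₂ᵒᵖ → [2]ᵒᵖ`, `CS¹ → [2]`, `(CS¹)ᵒᵖ → [2]ᵒᵖ`. -/
def Is1Fibration {E : Type*} {B : Type*} [Category E] [Category B] (p : E ⥤ B) : Prop :=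
  FunctorRLP pick0 p ∧ FunctorRLP pick0op p ∧
  FunctorRLP i2Incl p ∧ FunctorRLP i2Incl.op p ∧
  FunctorRLP cs1Incl p ∧ FunctorRLP cs1Incl.op p

end Paper
namespace Paper

variable (C : Type u) [Category.{v} C]

/-- The functor `Hom_{π(C)}(∗, −) : C ⥤ Type`. -/
noncomputable def homFromBase (x : C) : C ⥤ Type (max u v) :=
  piQ C ⋙ coyoneda.obj (Opposite.op ((piQ C).obj x))

/-- The category `Ĉ`: the Grothendieck construction (category of elements) of
`Hom_{π(C)}(∗, −) : C ⥤ Type`. -/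
noncomputable def Chat (x : C) := (homFromBase C x).Elements

noncomputable instance (x : C) : Category (Chat C x) := by unfold Chat; infer_instance

/-- The projection `T : Ĉ ⥤ C`, `(c, w) ↦ c`. -/
noncomputable def chatT (x : C) : Chat C x ⥤ C := CategoryOfElements.π _

/-- The base point `(∗, id)` of `Ĉ`. -/
noncomputable def chatPt (x : C) : Chat C x := ⟨x, 𝟙 ((piQ C).obj x)⟩

end Paper

namespace Paper

section Lifting

variable {C : Type*} [Category C] {E : Type*} [Category E] {q : E ⥤ C}

lemma pt_functor_ext {D : Type*} [Category D] {F G : Pt ⥤ D}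
    (h : F.obj ⟨PUnit.unit⟩ = G.obj ⟨PUnit.unit⟩) : F = G :=
  CategoryTheory.Functor.ext (fun ⟨⟨⟩⟩ => h) fun ⟨⟨⟩⟩ ⟨⟨⟩⟩ f => by
    obtain rfl : f = 𝟙 _ := Subsingleton.elim _ _
    simp

lemma FunctorURLP.eq_of_comp_eq {i : Fin 2} (hq : FunctorURLP ((Functor.const Pt).obj i) q)
    {g₁ g₂ : ComposableArrows E 1} (hi : g₁.obj i = g₂.obj i) (h : g₁ ⋙ q = g₂ ⋙ q) :
    g₁ = g₂ := by
  have hsq : (Functor.const Pt).obj (g₁.obj i) ⋙ q = (Functor.const Pt).obj i ⋙ g₁ ⋙ q :=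
    pt_functor_ext rfl
  obtain ⟨g, -, hg⟩ := hq _ _ hsq
  exact (hg g₁ ⟨pt_functor_ext rfl, rfl⟩).trans (hg g₂ ⟨pt_functor_ext hi.symm, h.symm⟩).symm

lemma FunctorURLP.exists_lift {i : Fin 2} (hq : FunctorURLP ((Functor.const Pt).obj i) q)
    (e : E) (f : ComposableArrows C 1) (h : q.obj e = f.obj i) :
    ∃ g : ComposableArrows E 1, g.obj i = e ∧ g ⋙ q = f := by
  obtain ⟨g, ⟨hg, hgq⟩, -⟩ := hq ((Functor.const Pt).obj e) f (pt_functor_ext h)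
  exact ⟨g, Functor.congr_obj hg ⟨⟨⟩⟩, hgq⟩

lemma mk₁_comp_eq_mk₁_comp {e₁ e₁' e₂ e₂' : E} {g₁ : e₁ ⟶ e₁'} {g₂ : e₂ ⟶ e₂'}
    (h : q.obj e₁ = q.obj e₂) (h' : q.obj e₁' = q.obj e₂') (hg : q.map g₁ ≍ q.map g₂) :
    ComposableArrows.mk₁ g₁ ⋙ q = ComposableArrows.mk₁ g₂ ⋙ q :=
  ComposableArrows.ext₁ h h' ((conj_eqToHom_iff_heq _ _ h h').2 hg)

lemma FunctorURLP.forward_lift_unique (hq : FunctorURLP pick0 q) {e₁ e₁' e₂ e₂' : E}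
    {g₁ : e₁ ⟶ e₁'} {g₂ : e₂ ⟶ e₂'} (h : e₁ = e₂) (h' : q.obj e₁' = q.obj e₂')
    (hg : q.map g₁ ≍ q.map g₂) : e₁' = e₂' ∧ g₁ ≍ g₂ := by
  have := hq.eq_of_comp_eq h (mk₁_comp_eq_mk₁_comp (congrArg q.obj h) h' hg)
  exact ⟨Functor.congr_obj this 1,
    Functor.hcongr_hom this (homOfLE (by decide : (0 : Fin 2) ≤ 1))⟩

lemma FunctorURLP.backward_lift_unique (hq : FunctorURLP pick1 q) {e₁ e₁' e₂ e₂' : E}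
    {g₁ : e₁ ⟶ e₁'} {g₂ : e₂ ⟶ e₂'} (h : q.obj e₁ = q.obj e₂) (h' : e₁' = e₂')
    (hg : q.map g₁ ≍ q.map g₂) : e₁ = e₂ ∧ g₁ ≍ g₂ := by
  have := hq.eq_of_comp_eq h' (mk₁_comp_eq_mk₁_comp h (congrArg q.obj h') hg)
  exact ⟨Functor.congr_obj this 0,
    Functor.hcongr_hom this (homOfLE (by decide : (0 : Fin 2) ≤ 1))⟩

lemma FunctorURLP.exists_forward_lift (hq : FunctorURLP pick0 q) {e : E} {c c' : C}
    (f : c ⟶ c') (h : q.obj e = c) : ∃ (e' : E) (g : e ⟶ e'), q.obj e' = c' ∧ q.map g ≍ f := by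
  obtain ⟨g, rfl, hg⟩ := hq.exists_lift e (ComposableArrows.mk₁ f) h
  exact ⟨g.right, g.hom, Functor.congr_obj hg 1,
    Functor.hcongr_hom hg (homOfLE (by decide : (0 : Fin 2) ≤ 1))⟩

lemma FunctorURLP.exists_backward_lift (hq : FunctorURLP pick1 q) {e' : E} {c c' : C}
    (f : c ⟶ c') (h : q.obj e' = c') : ∃ (e : E) (g : e ⟶ e'), q.obj e = c ∧ q.map g ≍ f := by
  obtain ⟨g, rfl, hg⟩ := hq.exists_lift e' (ComposableArrows.mk₁ f) h
  exact ⟨g.left, g.hom, Functor.congr_obj hg 0,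
    Functor.hcongr_hom hg (homOfLE (by decide : (0 : Fin 2) ≤ 1))⟩

lemma FunctorURLP.faithful (hq : FunctorURLP pick0 q) : q.Faithful where
  map_injective h := eq_of_heq (hq.forward_lift_unique rfl rfl (heq_of_eq h)).2

end Lifting

section Fiber

variable {C : Type*} [Category C] {E : Type u'} [Category.{v'} E] {q : E ⥤ C}
  (hq : FunctorURLP pick0 q)

noncomputable def fiberMap {c c' : C} (f : c ⟶ c') (a : {e : E // q.obj e = c}) :
    {e : E // q.obj e = c'} :=
  ⟨(hq.exists_forward_lift f a.2).choose,
    (hq.exists_forward_lift f a.2).choose_spec.choose_spec.1⟩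

lemma exists_hom_fiberMap {c c' : C} (f : c ⟶ c') (a : {e : E // q.obj e = c}) :
    ∃ g : a.1 ⟶ (fiberMap hq f a).1, q.map g ≍ f :=
  ⟨_, (hq.exists_forward_lift f a.2).choose_spec.choose_spec.2⟩

lemma fiberMap_eq {c c' : C} {f : c ⟶ c'} {a : {e : E // q.obj e = c}} {e' : E}
    (g : a.1 ⟶ e') (he' : q.obj e' = c') (hg : q.map g ≍ f) : fiberMap hq f a = ⟨e', he'⟩ := by
  obtain ⟨g₀, hg₀⟩ := exists_hom_fiberMap hq f a
  exact Subtype.ext (hq.forward_lift_unique rfl ((fiberMap hq f a).2.trans he'.symm)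
    (hg₀.trans hg.symm)).1

/-- The fibre functor `c ↦ q⁻¹(c)`; `FunctorURLP pick0 q` says that `q` is a discrete
opfibration. -/
noncomputable def fiber : C ⥤ Type u' where
  obj c := {e : E // q.obj e = c}
  map f := TypeCat.ofHom (fiberMap hq f)
  map_id c := by
    ext ⟨e, rfl⟩
    exact congrArg Subtype.val (fiberMap_eq hq (𝟙 e) rfl (by rw [q.map_id]))
  map_comp {c c' c''} f f' := by
    ext a
    obtain ⟨g, hg⟩ := exists_hom_fiberMap hq f a
    obtain ⟨g', hg'⟩ := exists_hom_fiberMap hq f' (fiberMap hq f a)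
    refine congrArg Subtype.val (fiberMap_eq hq (g ≫ g') _ ?_)
    rw [q.map_comp]
    exact heq_comp a.2 (fiberMap hq f a).2 (fiberMap hq f' _).2 hg hg'

end Fiber

section Transport

variable {C : Type u} [Category.{v} C] {E : Type u'} [Category.{v'} E] {q : E ⥤ C}

lemma IsCovering.fiber_map_bijective (hq : IsCovering q) {c c' : C} (f : c ⟶ c') :
    Function.Bijective ((fiber hq.1).map f) := by
  constructor
  · intro a b hab
    obtain ⟨g, hg⟩ := exists_hom_fiberMap hq.1 f a
    obtain ⟨g', hg'⟩ := exists_hom_fiberMap hq.1 f b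
    exact Subtype.ext (hq.2.backward_lift_unique (a.2.trans b.2.symm) (congrArg Subtype.val hab)
      (hg.trans hg'.symm)).1
  · intro b
    obtain ⟨e, g, he, hg⟩ := hq.2.exists_backward_lift f b.2
    exact ⟨⟨e, he⟩, fiberMap_eq hq.1 g b.2 hg⟩

noncomputable def fiberTransport (hq : IsCovering q) : piCat C ⥤ Type u' :=
  Localization.Construction.lift (fiber hq.1)
    fun _ _ f _ => (isIso_iff_bijective _).2 (hq.fiber_map_bijective f)

end Transport

section LiftOfSection

variable {C : Type*} [Category C] {E : Type u'} [Category.{v'} E] {q : E ⥤ C}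
  {D : Type*} [Category D] (hq : FunctorURLP pick0 q) (P : D ⥤ C)
  (s : ∀ d, (fiber hq).obj (P.obj d))
  (hs : ∀ {d d' : D} (φ : d ⟶ d'), (fiber hq).map (P.map φ) (s d) = s d')

variable {P s} in
noncomputable def sectionHom {d d' : D} (φ : d ⟶ d') : (s d).1 ⟶ (s d').1 :=
  (exists_hom_fiberMap hq _ _).choose ≫ eqToHom (congrArg Subtype.val (hs φ))

lemma map_sectionHom {d d' : D} (φ : d ⟶ d') : q.map (sectionHom hq hs φ) ≍ P.map φ := by
  rw [sectionHom, q.map_comp, eqToHom_map, comp_eqToHom_heq_iff]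
  exact (exists_hom_fiberMap hq _ _).choose_spec

noncomputable def liftOfSection : D ⥤ E :=
  haveI := hq.faithful
  Functor.Faithful.div P q (fun d => (s d).1) (fun d => (s d).2) (sectionHom hq hs)
    (map_sectionHom hq P s hs _)

lemma liftOfSection_comp : liftOfSection hq P s hs ⋙ q = P :=
  CategoryTheory.Functor.hext (fun d => (s d).2) fun _ _ => map_sectionHom hq P s hs

end LiftOfSection

section Rigidity

variable {E : Type*} [Category E] {C : Type*} [Category C] {q : E ⥤ C}
  {D : Type*} [Category D]

lemma IsCovering.functor_eq_of_comp_eq (hq : IsCovering q) [IsPreconnected D] {β γ : D ⥤ E}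
    (h : β ⋙ q = γ ⋙ q) {d₀ : D} (h₀ : β.obj d₀ = γ.obj d₀) : β = γ := by
  have hmap {d d' : D} (φ : d ⟶ d') : q.map (β.map φ) ≍ q.map (γ.map φ) :=
    Functor.hcongr_hom h φ
  have hobj (d : D) : β.obj d = γ.obj d :=
    induct_on_objects {d | β.obj d = γ.obj d} h₀ (fun φ =>
      ⟨fun hd => (hq.1.forward_lift_unique hd (Functor.congr_obj h _) (hmap φ)).1,
        fun hd' => (hq.2.backward_lift_unique (Functor.congr_obj h _) hd' (hmap φ)).1⟩) d
  exact CategoryTheory.Functor.hext hobj fun _ _ φ =>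
    (hq.1.forward_lift_unique (hobj _) (Functor.congr_obj h _) (hmap φ)).2

end Rigidity

section UniversalCover

variable {C : Type u} [Category.{v} C] {x : C}

-- Induction over the morphisms of `π(C)`: both morphisms of `C` and their formal inverses
-- act on `Ĉ` by moves along a zigzag.
lemma zigzag_chatPt (z : Chat C x) : Zigzag (chatPt C x) z := by
  let obj := (Localization.Construction.objEquiv (⊤ : MorphismProperty C)).symm
  let P : MorphismProperty (piCat C) := fun X Y w =>
    ∀ u : (piQ C).obj x ⟶ X, Zigzag (J := Chat C x) ⟨obj X, u⟩ ⟨obj Y, u ≫ w⟩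
  have : P.IsStableUnderComposition := ⟨fun w w' hw hw' u =>
    Category.assoc u w w' ▸ (hw u).trans (hw' (u ≫ w))⟩
  have hP : P = ⊤ := Localization.Construction.morphismProperty_eq_top P
    (fun _ _ f _ => Zigzag.of_hom ⟨f, rfl⟩)
    (fun _ _ w hw u => Zigzag.of_inv ⟨w, by
      show (u ≫ Localization.Construction.wInv w hw) ≫ (piQ C).map w = u
      rw [Category.assoc, show (piQ C).map w = (Localization.Construction.wIso w hw).hom from rfl,
        Iso.inv_hom_id, Category.comp_id]⟩)
  have := (hP ▸ trivial : P z.2) (𝟙 _)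
  erw [Category.id_comp] at this
  exact this

instance : IsConnected (Chat C x) :=
  haveI : Nonempty (Chat C x) := ⟨chatPt C x⟩
  zigzag_isConnected fun z z' => (zigzag_chatPt z).symm.trans (zigzag_chatPt z')

variable {E : Type u'} [Category.{v'} E] {q : E ⥤ C} (hq : IsCovering q) {e : E}
  (hbase : q.obj e = x)

lemma fiber_map_fiberTransport_map {z z' : Chat C x} (φ : z ⟶ z')
    (a : (fiber hq.1).obj x) :
    (fiber hq.1).map ((chatT C x).map φ) ((fiberTransport hq).map z.2 a) =
      (fiberTransport hq).map z'.2 a := by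
  rw [← show z.2 ≫ (piQ C).map φ.1 = z'.2 from φ.2]
  erw [(fiberTransport hq).map_comp]
  rfl

noncomputable def universalCoverLift : Chat C x ⥤ E :=
  liftOfSection hq.1 (chatT C x) (fun z => (fiberTransport hq).map z.2 ⟨e, hbase⟩)
    (fiber_map_fiberTransport_map hq · _)

lemma universalCoverLift_obj_chatPt : (universalCoverLift hq hbase).obj (chatPt C x) = e := by
  show ((fiberTransport hq).map (𝟙 _) ⟨e, hbase⟩).1 = e
  erw [(fiberTransport hq).map_id]
  rfl

lemma universalCoverLift_comp : universalCoverLift hq hbase ⋙ q = chatT C x :=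
  liftOfSection_comp hq.1 _ _ (fiber_map_fiberTransport_map hq · _)

end UniversalCover

theorem universal_cover_maps_to_any_cover_general
    (C : Type u) (E : Type u') [Category.{v} C] [Category.{v'} E]
    (x : C) (e : E) (q : E ⥤ C) (hq : IsCovering q) (hbase : q.obj e = x) :
    ∃! α : Chat C x ⥤ E, α.obj (chatPt C x) = e ∧ α ⋙ q = chatT C x :=
  ⟨universalCoverLift hq hbase,
    ⟨universalCoverLift_obj_chatPt hq hbase, universalCoverLift_comp hq hbase⟩,
    fun _ ⟨hpt, hcomp⟩ => hq.functor_eq_of_comp_eq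
      (hcomp.trans (universalCoverLift_comp hq hbase).symm)
      (hpt.trans (universalCoverLift_obj_chatPt hq hbase).symm)⟩

/-- **Statement 13.** Let `C` and `E` be path connected pointed small categories and
`q : E ⥤ C` a covering preserving the base point.  Then there exists a unique
base-point-preserving functor `α : Ĉ ⥤ E` with `q ∘ α = T`, where `T : Ĉ ⥤ C` is the
universal cover of `C`. -/
theorem universal_cover_maps_to_any_cover
    (C : Type u) (E : Type u') [Category.{v} C] [Category.{v'} E]
    [IsConnected C] [IsConnected E]
    (x : C) (e : E) (q : E ⥤ C) (hq : IsCovering q) (hbase : q.obj e = x) :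
    ∃! α : Chat C x ⥤ E, α.obj (chatPt C x) = e ∧ α ⋙ q = chatT C x :=
  universal_cover_maps_to_any_cover_general C E x e q hq hbase

end Paper
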